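/- Let P(λ) = Σ_{i=0}^k λ^i A_i be an m×n matrix polynomial of grade k over F and let v, w ∈ F^k. The set of pencils in 𝕃₁(P) with right ansatz vector v consists exactly of all L(λ) = λX + Y with X = [v⊗A_k −W] and Y = [W + v⊗[A_{k-1} … A_1] v⊗A_0], where W ∈ F^{km×(k-1)n} is arbitrary. Similarly, the pencils in 𝕃₂(P) with left ansatz vector w are exactly the L(λ) = λX + Y with X = [w^T⊗A_k; −Ŵ] and Y = [Ŵ + w^T⊗[A_{k-1}^T … A_1^T]^T; w^T⊗A_0], where Ŵ ∈ F^{(k-1)m×kn} is arbitrary. Consequently, 𝕃₁(P) and 𝕃₂(P) are F-vector spaces of dimension k(k−1)mn + k. -/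
import Mathlib


noncomputable section

open Polynomial Matrix

namespace GLin

variable {F : Type*} [RCLike F]

/-! ### Matrix polynomials and pencils -/

/-- The matrix polynomial `P(λ) = ∑_{i=0}^k λ^i A_i` determined by its
coefficient matrices `A_0, …, A_k` (grade `k`). -/
def matPoly {k m n : ℕ} (A : Fin (k + 1) → Matrix (Fin m) (Fin n) F) :
    Matrix (Fin m) (Fin n) F[X] :=
  Matrix.of fun r c => ∑ i : Fin (k + 1), Polynomial.C (A i r c) * Polynomial.X ^ (i : ℕ)

/-- The matrix pencil `L(λ) = λ X + Y`. -/
def pencil {ρ γ : Type*} (Xc Yc : Matrix ρ γ F) : Matrix ρ γ F[X] :=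
  Matrix.of fun i j => Polynomial.C (Xc i j) * Polynomial.X + Polynomial.C (Yc i j)

/-- `Λ_k(λ) ⊗ I_n` where `Λ_k(λ) = (λ^{k-1}, …, λ, 1)ᵀ`. -/
def Lam (F : Type*) [RCLike F] (k n : ℕ) : Matrix (Fin k × Fin n) (Fin n) F[X] :=
  Matrix.of fun p c => if p.2 = c then Polynomial.X ^ (k - 1 - (p.1 : ℕ)) else 0

/-- `Λ_k(λ)ᵀ ⊗ I_m`. -/
def LamRow (F : Type*) [RCLike F] (k m : ℕ) : Matrix (Fin m) (Fin k × Fin m) F[X] :=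
  Matrix.of fun r p => if r = p.2 then Polynomial.X ^ (k - 1 - (p.1 : ℕ)) else 0

/-- `v ⊗ P(λ)`. -/
def vkron {k m n : ℕ} (v : Fin k → F) (P : Matrix (Fin m) (Fin n) F[X]) :
    Matrix (Fin k × Fin m) (Fin n) F[X] :=
  Matrix.of fun p c => Polynomial.C (v p.1) * P p.2 c

/-- `wᵀ ⊗ P(λ)`. -/
def wkron {k m n : ℕ} (w : Fin k → F) (P : Matrix (Fin m) (Fin n) F[X]) :
    Matrix (Fin m) (Fin k × Fin n) F[X] :=
  Matrix.of fun r q => Polynomial.C (w q.1) * P r q.2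

/-- The defining identity of `𝕃₁(P)`: `L(λ)(Λ_k(λ) ⊗ I_n) = v ⊗ P(λ)`. -/
def RightAnsatz {k m n : ℕ} (P : Matrix (Fin m) (Fin n) F[X])
    (L : Matrix (Fin k × Fin m) (Fin k × Fin n) F[X]) (v : Fin k → F) : Prop :=
  L * Lam F k n = vkron v P

/-- The defining identity of `𝕃₂(P)`: `(Λ_k(λ)ᵀ ⊗ I_m) L(λ) = wᵀ ⊗ P(λ)`. -/
def LeftAnsatz {k m n : ℕ} (P : Matrix (Fin m) (Fin n) F[X])
    (L : Matrix (Fin k × Fin m) (Fin k × Fin n) F[X]) (w : Fin k → F) : Prop :=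
  LamRow F k m * L = wkron w P

/-- The vector `α e₁ ∈ F^k`. -/
def e1 {k : ℕ} (α : F) : Fin k → F := fun i => if (i : ℕ) = 0 then α else 0

/-- `M ⊗ I_m`. -/
def kronId {k m : ℕ} (M : Matrix (Fin k) (Fin k) F) :
    Matrix (Fin k × Fin m) (Fin k × Fin m) F :=
  Matrix.of fun p q => if p.2 = q.2 then M p.1 q.1 else 0

/-! ### (strong) g-linearizations -/

/-- `diag(P(λ), I_{k-1} ⊗ I_{m,n})`. -/
def glinTarget {k m n : ℕ} (P : Matrix (Fin m) (Fin n) F[X]) :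
    Matrix (Fin k × Fin m) (Fin k × Fin n) F[X] :=
  Matrix.of fun p q =>
    if p.1 = q.1 then
      (if (p.1 : ℕ) = 0 then P p.2 q.2 else if (p.2 : ℕ) = (q.2 : ℕ) then 1 else 0)
    else 0

/-- A `km × kn` pencil (or matrix polynomial) `L` is a g-linearization of the `m × n`
matrix polynomial `P` of grade `k` if `E(λ) L(λ) G(λ) = diag(P(λ), I_{k-1} ⊗ I_{m,n})`
for unimodular `E`, `G`. -/
def IsGLin {k m n : ℕ} (P : Matrix (Fin m) (Fin n) F[X])
    (L : Matrix (Fin k × Fin m) (Fin k × Fin n) F[X]) : Prop :=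
  ∃ (E : Matrix (Fin k × Fin m) (Fin k × Fin m) F[X])
    (G : Matrix (Fin k × Fin n) (Fin k × Fin n) F[X]),
      IsUnit E.det ∧ IsUnit G.det ∧ E * L * G = glinTarget P

/-- grade-`N` reversal `rev_N P(λ) = λ^N P(1/λ)`, entrywise. -/
def revMat {ρ γ : Type*} (N : ℕ) (P : Matrix ρ γ F[X]) : Matrix ρ γ F[X] :=
  P.map fun p => Polynomial.reflect N p

/-- Strong g-linearization of the grade-`k` matrix polynomial with coefficients `A`. -/
def IsStrongGLin {k m n : ℕ} (A : Fin (k + 1) → Matrix (Fin m) (Fin n) F)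
    (L : Matrix (Fin k × Fin m) (Fin k × Fin n) F[X]) : Prop :=
  IsGLin (matPoly A) L ∧ IsGLin (revMat k (matPoly A)) (revMat 1 L)

/-! ### linearizations (rectangular, of size `(m+s) × (n+s)`) -/

/-- A matrix polynomial `L` (indexed by arbitrary finite types of cardinalities
`m + s` and `n + s`) is a linearization of `P` if, after identifying the index types
with `Fin m ⊕ Fin s` and `Fin n ⊕ Fin s`, one has `E(λ) L(λ) G(λ) = diag(P(λ), I_s)`
for unimodular `E`, `G`. -/
def IsLin {m n : ℕ} (s : ℕ) (P : Matrix (Fin m) (Fin n) F[X])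
    {ρ γ : Type*} [Fintype ρ] [DecidableEq ρ] [Fintype γ] [DecidableEq γ]
    (L : Matrix ρ γ F[X]) : Prop :=
  ∃ (er : ρ ≃ (Fin m ⊕ Fin s)) (ec : γ ≃ (Fin n ⊕ Fin s))
    (E : Matrix (Fin m ⊕ Fin s) (Fin m ⊕ Fin s) F[X])
    (G : Matrix (Fin n ⊕ Fin s) (Fin n ⊕ Fin s) F[X]),
      IsUnit E.det ∧ IsUnit G.det ∧
        E * Matrix.reindex er ec L * G = Matrix.fromBlocks P 0 0 1

/-- Strong linearization of the grade-`k` matrix polynomial with coefficients `A`. -/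
def IsStrongLin {k m n : ℕ} (s : ℕ) (A : Fin (k + 1) → Matrix (Fin m) (Fin n) F)
    {ρ γ : Type*} [Fintype ρ] [DecidableEq ρ] [Fintype γ] [DecidableEq γ]
    (L : Matrix ρ γ F[X]) : Prop :=
  IsLin s (matPoly A) L ∧ IsLin s (revMat k (matPoly A)) (revMat 1 L)

/-! ### shifted sums -/

/-- Column shifted sum `X ⊞→ Y`. -/
def colShiftSum {k m n : ℕ} (Xc Yc : Matrix (Fin k × Fin m) (Fin k × Fin n) F) :
    Matrix (Fin k × Fin m) (Fin (k + 1) × Fin n) F :=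
  Matrix.of fun p q =>
    (if h : (q.1 : ℕ) < k then Xc p (⟨(q.1 : ℕ), h⟩, q.2) else 0) +
    (if h : 0 < (q.1 : ℕ) then
        Yc p (⟨(q.1 : ℕ) - 1, by have := q.1.isLt; omega⟩, q.2)
      else 0)

/-- Row shifted sum `X ⊞↓ Y`. -/
def rowShiftSum {k m n : ℕ} (Xc Yc : Matrix (Fin k × Fin m) (Fin k × Fin n) F) :
    Matrix (Fin (k + 1) × Fin m) (Fin k × Fin n) F :=
  Matrix.of fun p q =>
    (if h : (p.1 : ℕ) < k then Xc (⟨(p.1 : ℕ), h⟩, p.2) q else 0) +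
    (if h : 0 < (p.1 : ℕ) then
        Yc (⟨(p.1 : ℕ) - 1, by have := p.1.isLt; omega⟩, p.2) q
      else 0)

/-! ### the parametrization of `𝕃₁(P)` and `𝕃₂(P)` -/

/-- `X = [v ⊗ A_k ∣ -W]`. -/
def L1X {k m n : ℕ} (A : Fin (k + 1) → Matrix (Fin m) (Fin n) F) (v : Fin k → F)
    (W : Matrix (Fin k × Fin m) (Fin (k - 1) × Fin n) F) :
    Matrix (Fin k × Fin m) (Fin k × Fin n) F :=
  Matrix.of fun p q =>
    if h : (q.1 : ℕ) = 0 then v p.1 * A (Fin.last k) p.2 q.2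
    else -W p (⟨(q.1 : ℕ) - 1, by have := q.1.isLt; omega⟩, q.2)

/-- `Y = [W + v ⊗ [A_{k-1} ⋯ A_1] ∣ v ⊗ A_0]`. -/
def L1Y {k m n : ℕ} (A : Fin (k + 1) → Matrix (Fin m) (Fin n) F) (v : Fin k → F)
    (W : Matrix (Fin k × Fin m) (Fin (k - 1) × Fin n) F) :
    Matrix (Fin k × Fin m) (Fin k × Fin n) F :=
  Matrix.of fun p q =>
    if h : (q.1 : ℕ) < k - 1 then
      W p (⟨(q.1 : ℕ), h⟩, q.2) + v p.1 * A (⟨k - 1 - (q.1 : ℕ), by omega⟩) p.2 q.2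
    else v p.1 * A 0 p.2 q.2

/-- `X = [wᵀ ⊗ A_k ; -Ŵ]`. -/
def L2X {k m n : ℕ} (A : Fin (k + 1) → Matrix (Fin m) (Fin n) F) (w : Fin k → F)
    (W : Matrix (Fin (k - 1) × Fin m) (Fin k × Fin n) F) :
    Matrix (Fin k × Fin m) (Fin k × Fin n) F :=
  Matrix.of fun p q =>
    if h : (p.1 : ℕ) = 0 then w q.1 * A (Fin.last k) p.2 q.2
    else -W (⟨(p.1 : ℕ) - 1, by have := p.1.isLt; omega⟩, p.2) q

/-- `Y = [Ŵ + wᵀ ⊗ [A_{k-1}ᵀ ⋯ A_1ᵀ]ᵀ ; wᵀ ⊗ A_0]`. -/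
def L2Y {k m n : ℕ} (A : Fin (k + 1) → Matrix (Fin m) (Fin n) F) (w : Fin k → F)
    (W : Matrix (Fin (k - 1) × Fin m) (Fin k × Fin n) F) :
    Matrix (Fin k × Fin m) (Fin k × Fin n) F :=
  Matrix.of fun p q =>
    if h : (p.1 : ℕ) < k - 1 then
      W (⟨(p.1 : ℕ), h⟩, p.2) q + w q.1 * A (⟨k - 1 - (p.1 : ℕ), by omega⟩) p.2 q.2
    else w q.1 * A 0 p.2 q.2

/-! ### block structure and `Z`-matrices -/

/-- Assemble a `km × kn` matrix from blocks with row split `m + (k-1)m` and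
column split `n + (k-1)n`. -/
def blk {k m n : ℕ} (TL : Matrix (Fin m) (Fin n) F)
    (TR : Matrix (Fin m) (Fin (k - 1) × Fin n) F)
    (BL : Matrix (Fin (k - 1) × Fin m) (Fin n) F)
    (BR : Matrix (Fin (k - 1) × Fin m) (Fin (k - 1) × Fin n) F) :
    Matrix (Fin k × Fin m) (Fin k × Fin n) F :=
  Matrix.of fun p q =>
    if hp : (p.1 : ℕ) = 0 then
      if hq : (q.1 : ℕ) = 0 then TL p.2 q.2
      else TR p.2 (⟨(q.1 : ℕ) - 1, by have := q.1.isLt; omega⟩, q.2)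
    else
      if hq : (q.1 : ℕ) = 0 then
        BL (⟨(p.1 : ℕ) - 1, by have := p.1.isLt; omega⟩, p.2) q.2
      else
        BR (⟨(p.1 : ℕ) - 1, by have := p.1.isLt; omega⟩, p.2)
          (⟨(q.1 : ℕ) - 1, by have := q.1.isLt; omega⟩, q.2)

/-- Assemble `[[Y₁₁, T],[Z, 0]]`, row split `m + (k-1)m`, column split `(k-1)n + n`. -/
def blkY1 {k m n : ℕ} (Y11 : Matrix (Fin m) (Fin (k - 1) × Fin n) F)
    (T : Matrix (Fin m) (Fin n) F)
    (Z : Matrix (Fin (k - 1) × Fin m) (Fin (k - 1) × Fin n) F) :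
    Matrix (Fin k × Fin m) (Fin k × Fin n) F :=
  Matrix.of fun p q =>
    if hp : (p.1 : ℕ) = 0 then
      if hq : (q.1 : ℕ) < k - 1 then Y11 p.2 (⟨(q.1 : ℕ), hq⟩, q.2) else T p.2 q.2
    else
      if hq : (q.1 : ℕ) < k - 1 then
        Z (⟨(p.1 : ℕ) - 1, by have := p.1.isLt; omega⟩, p.2) (⟨(q.1 : ℕ), hq⟩, q.2)
      else 0

/-- Assemble `[[Y₁₁, Z],[T, 0]]`, row split `(k-1)m + m`, column split `n + (k-1)n`. -/
def blkY2 {k m n : ℕ} (Y11 : Matrix (Fin (k - 1) × Fin m) (Fin n) F)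
    (Z : Matrix (Fin (k - 1) × Fin m) (Fin (k - 1) × Fin n) F)
    (T : Matrix (Fin m) (Fin n) F) :
    Matrix (Fin k × Fin m) (Fin k × Fin n) F :=
  Matrix.of fun p q =>
    if hp : (p.1 : ℕ) < k - 1 then
      if hq : (q.1 : ℕ) = 0 then Y11 (⟨(p.1 : ℕ), hp⟩, p.2) q.2
      else Z (⟨(p.1 : ℕ), hp⟩, p.2) (⟨(q.1 : ℕ) - 1, by have := q.1.isLt; omega⟩, q.2)
    else
      if hq : (q.1 : ℕ) = 0 then T p.2 q.2 else 0

/-- The `Z`-matrix of `L = λX + Y ∈ 𝕃₁(P)` with respect to `M`: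
the lower-left `(k-1)m × (k-1)n` block of `(M ⊗ I_m) Y`. -/
def Zmat1 {k m n : ℕ} (M : Matrix (Fin k) (Fin k) F)
    (Yc : Matrix (Fin k × Fin m) (Fin k × Fin n) F) :
    Matrix (Fin (k - 1) × Fin m) (Fin (k - 1) × Fin n) F :=
  Matrix.of fun p q =>
    (kronId M * Yc : Matrix (Fin k × Fin m) (Fin k × Fin n) F)
      (⟨(p.1 : ℕ) + 1, by have := p.1.isLt; omega⟩, p.2)
      (⟨(q.1 : ℕ), by have := q.1.isLt; omega⟩, q.2)

/-- The `Z`-matrix of `L = λX + Y ∈ 𝕃₂(P)` with respect to `M̂`: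
the upper-right `(k-1)m × (k-1)n` block of `Y (M̂ᵀ ⊗ I_n)`. -/
def Zmat2 {k m n : ℕ} (M : Matrix (Fin k) (Fin k) F)
    (Yc : Matrix (Fin k × Fin m) (Fin k × Fin n) F) :
    Matrix (Fin (k - 1) × Fin m) (Fin (k - 1) × Fin n) F :=
  Matrix.of fun p q =>
    (Yc * kronId Mᵀ : Matrix (Fin k × Fin m) (Fin k × Fin n) F)
      (⟨(p.1 : ℕ), by have := p.1.isLt; omega⟩, p.2)
      (⟨(q.1 : ℕ) + 1, by have := q.1.isLt; omega⟩, q.2)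

/-- `L = λX + Y ∈ 𝕃₁(P)` with right ansatz vector `v` has full `Z`-rank. -/
def FullZrank1 {k m n : ℕ} (Yc : Matrix (Fin k × Fin m) (Fin k × Fin n) F)
    (v : Fin k → F) : Prop :=
  ∃ (M : Matrix (Fin k) (Fin k) F) (α : F),
    IsUnit M ∧ α ≠ 0 ∧ M.mulVec v = e1 α ∧ (Zmat1 M Yc).rank = (k - 1) * n

/-- `L = λX + Y ∈ 𝕃₂(P)` with left ansatz vector `w` has full `Z`-rank. -/
def FullZrank2 {k m n : ℕ} (Yc : Matrix (Fin k × Fin m) (Fin k × Fin n) F)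
    (w : Fin k → F) : Prop :=
  ∃ (M : Matrix (Fin k) (Fin k) F) (α : F),
    IsUnit M ∧ α ≠ 0 ∧ M.mulVec w = e1 α ∧ (Zmat2 M Yc).rank = (k - 1) * m

/-! ### null spaces, minimal bases and minimal indices over `F(λ)` -/

/-- A matrix polynomial viewed as a matrix over the field of rational functions. -/
def matRF {ρ γ : Type*} (P : Matrix ρ γ F[X]) : Matrix ρ γ (RatFunc F) :=
  P.map (algebraMap F[X] (RatFunc F))

/-- The right null space `N_r(P) = {x(λ) : P(λ) x(λ) ≡ 0}` over `F(λ)`. -/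
def Nr {ρ γ : Type*} [Fintype γ] (P : Matrix ρ γ F[X]) :
    Submodule (RatFunc F) (γ → RatFunc F) :=
  LinearMap.ker (Matrix.mulVecLin (matRF P))

/-- The left null space `N_l(P) = {y(λ) : y(λ)ᵀ P(λ) ≡ 0}` over `F(λ)`. -/
def Nl {ρ γ : Type*} [Fintype ρ] (P : Matrix ρ γ F[X]) :
    Submodule (RatFunc F) (ρ → RatFunc F) :=
  Nr Pᵀ

/-- The normal rank of a matrix polynomial: its rank over `F(λ)`. -/
def nrank {ρ γ : Type*} [Fintype γ] (P : Matrix ρ γ F[X]) : ℕ :=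
  (matRF P).rank

/-- The rational vector determined by a vector polynomial. -/
def polyVec {γ : Type*} (x : γ → F[X]) : γ → RatFunc F :=
  fun i => algebraMap F[X] (RatFunc F) (x i)

/-- A rational vector is a vector polynomial if all its entries are polynomials. -/
def IsVecPoly {γ : Type*} (x : γ → RatFunc F) : Prop :=
  ∃ p : γ → F[X], x = polyVec p

/-- The degree of a vector polynomial: the greatest degree of its components. -/
def polyVecDeg {γ : Type*} [Fintype γ] (x : γ → F[X]) : ℕ :=
  Finset.univ.sup fun i => (x i).natDegree

/-- A polynomial basis of the subspace `V` of `F(λ)^γ`. -/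
def IsPolyBasis {γ ι : Type*} [Fintype γ]
    (V : Submodule (RatFunc F) (γ → RatFunc F)) (b : ι → γ → F[X]) : Prop :=
  LinearIndependent (RatFunc F) (fun i => polyVec (b i)) ∧
    Submodule.span (RatFunc F) (Set.range fun i => polyVec (b i)) = V

/-- A minimal basis of `V`: a polynomial basis of least order (sum of degrees). -/
def IsMinimalBasis {γ ι : Type*} [Fintype γ] [Fintype ι]
    (V : Submodule (RatFunc F) (γ → RatFunc F)) (b : ι → γ → F[X]) : Prop :=
  IsPolyBasis V b ∧
    ∀ (d : ℕ) (b' : Fin d → γ → F[X]), IsPolyBasis V b' →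
      ∑ i, polyVecDeg (b i) ≤ ∑ i, polyVecDeg (b' i)

/-- `ε` is the list of minimal indices of `V`: some minimal basis of `V` has
`ε` as its list of degrees. -/
def HasMinIndices {γ : Type*} [Fintype γ]
    (V : Submodule (RatFunc F) (γ → RatFunc F)) {d : ℕ} (ε : Fin d → ℕ) : Prop :=
  ∃ b : Fin d → γ → F[X], IsMinimalBasis V b ∧ ∀ i, polyVecDeg (b i) = ε i

/-- `Λ_k(λ) ⊗ x(λ)`. -/
def lamTensor {n : ℕ} (k : ℕ) (x : Fin n → RatFunc F) : Fin k × Fin n → RatFunc F :=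
  fun p => algebraMap F[X] (RatFunc F) (Polynomial.X ^ (k - 1 - (p.1 : ℕ))) * x p.2

/-- The matrix `vᵀ ⊗ I_m` over `F(λ)`; `𝓛_v(y) = (vproj v).mulVec y`. -/
def vproj {k m : ℕ} (v : Fin k → F) : Matrix (Fin m) (Fin k × Fin m) (RatFunc F) :=
  Matrix.of fun r p =>
    if r = p.2 then algebraMap F[X] (RatFunc F) (Polynomial.C (v p.1)) else 0

/-- `(vᵀ ⊗ I_m) y` at the level of vector polynomials. -/
def LvPoly {k m : ℕ} (v : Fin k → F) (y : Fin k × Fin m → F[X]) : Fin m → F[X] :=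
  fun r => ∑ i : Fin k, Polynomial.C (v i) * y (i, r)

/-- The rational subspace spanned by the rows of a matrix polynomial. -/
def rowSpan {ρ γ : Type*} [Fintype γ] (B : Matrix ρ γ F[X]) :
    Submodule (RatFunc F) (γ → RatFunc F) :=
  Submodule.span (RatFunc F) (Set.range fun i => polyVec (B i))

/-- A matrix polynomial is a minimal basis if its rows form a minimal basis of the
rational subspace they span. -/
def IsMinimalBasisMat {ρ γ : Type*} [Fintype ρ] [Fintype γ] (B : Matrix ρ γ F[X]) : Prop :=
  IsMinimalBasis (rowSpan B) (fun i => B i)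

/-- Dual minimal bases: `B ∈ F[λ]^{n₁×n}`, `C ∈ F[λ]^{n₂×n}` minimal bases with
`n₁ + n₂ = n` and `B Cᵀ = 0`. -/
def DualMinBases {ρ ρ' γ : Type*} [Fintype ρ] [Fintype ρ'] [Fintype γ]
    (B : Matrix ρ γ F[X]) (Cm : Matrix ρ' γ F[X]) : Prop :=
  IsMinimalBasisMat B ∧ IsMinimalBasisMat Cm ∧
    Fintype.card ρ + Fintype.card ρ' = Fintype.card γ ∧ B * Cmᵀ = 0

/-! ### norms, singular values -/

/-- Square of the Frobenius norm of a constant matrix. -/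
def frobSq {ρ γ : Type*} [Fintype ρ] [Fintype γ] (Ac : Matrix ρ γ F) : ℝ :=
  ∑ i, ∑ j, ‖Ac i j‖ ^ 2

/-- `‖λX + Y‖_F = sqrt(‖X‖_F² + ‖Y‖_F²)`. -/
def penFrob {ρ γ : Type*} [Fintype ρ] [Fintype γ] (Xc Yc : Matrix ρ γ F) : ℝ :=
  Real.sqrt (frobSq Xc + frobSq Yc)

/-- `‖P‖_F = sqrt(∑ ‖A_i‖_F²)` for `P(λ) = ∑ λ^i A_i`. -/
def famFrob {k m n : ℕ} (A : Fin (k + 1) → Matrix (Fin m) (Fin n) F) : ℝ :=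
  Real.sqrt (∑ i, frobSq (A i))

/-- `‖P‖_F` for a matrix polynomial of grade `g`. -/
def mpolyFrob {ρ γ : Type*} [Fintype ρ] [Fintype γ] (g : ℕ) (P : Matrix ρ γ F[X]) : ℝ :=
  Real.sqrt (∑ i, ∑ j, ∑ d ∈ Finset.range (g + 1), ‖(P i j).coeff d‖ ^ 2)

/-- Square of the Euclidean norm of a vector. -/
def vecNormSq {ι : Type*} [Fintype ι] (x : ι → F) : ℝ := ∑ i, ‖x i‖ ^ 2

/-- The smallest singular value of a matrix. -/
def sigmaMin {ρ γ : Type*} [Fintype ρ] [Fintype γ] (Ac : Matrix ρ γ F) : ℝ :=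
  if Fintype.card γ ≤ Fintype.card ρ then
    sInf {r : ℝ | ∃ x : γ → F, vecNormSq x = 1 ∧ r = Real.sqrt (vecNormSq (Ac.mulVec x))}
  else
    sInf {r : ℝ | ∃ y : ρ → F, vecNormSq y = 1 ∧ r = Real.sqrt (vecNormSq (Acᴴ.mulVec y))}

/-- The spectral norm (2-norm) of a matrix. -/
def norm2 {ρ γ : Type*} [Fintype ρ] [Fintype γ] (Ac : Matrix ρ γ F) : ℝ :=
  sSup {r : ℝ | ∃ x : γ → F, vecNormSq x = 1 ∧ r = Real.sqrt (vecNormSq (Ac.mulVec x))}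

/-- `κ₂(D) = ‖D‖₂ ‖D⁻¹‖₂`. -/
def cond2 {ρ : Type*} [Fintype ρ] [DecidableEq ρ] (Dc : Matrix ρ ρ F) : ℝ :=
  norm2 Dc * norm2 Dc⁻¹

/-! ### pencils used in the backward error analysis -/

/-- `B(λ) = λ [0 ∣ -R̃] + [R̃ ∣ 0]`, i.e. `R̃ (H_{k-1}(λ) ⊗ I_n)` up to sign conventions. -/
def Bpencil {k n : ℕ} (R : Matrix (Fin (k - 1) × Fin n) (Fin (k - 1) × Fin n) F) :
    Matrix (Fin (k - 1) × Fin n) (Fin k × Fin n) F[X] :=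
  Matrix.of fun p q =>
    (if h : (q.1 : ℕ) < k - 1 then Polynomial.C (R p (⟨(q.1 : ℕ), h⟩, q.2)) else 0) +
    (if h : 0 < (q.1 : ℕ) then
        Polynomial.X *
          Polynomial.C (-R p (⟨(q.1 : ℕ) - 1, by have := q.1.isLt; omega⟩, q.2))
      else 0)

/-- The coefficient of `λ` in `H_{k-1}(λ) ⊗ I_n`. -/
def Hlam (F : Type*) [RCLike F] (k n : ℕ) :
    Matrix (Fin (k - 1) × Fin n) (Fin k × Fin n) F :=
  Matrix.of fun p q => if p.2 = q.2 ∧ (q.1 : ℕ) = (p.1 : ℕ) + 1 then 1 else 0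

/-- The constant coefficient of `H_{k-1}(λ) ⊗ I_n`. -/
def Hconst (F : Type*) [RCLike F] (k n : ℕ) :
    Matrix (Fin (k - 1) × Fin n) (Fin k × Fin n) F :=
  Matrix.of fun p q => if p.2 = q.2 ∧ (q.1 : ℕ) = (p.1 : ℕ) then -1 else 0

/-- The convolution matrix `C_j(λ Xc + Yc)` of a pencil, with `j+1` block columns. -/
def convPencil {ρ γ : Type*} (Xc Yc : Matrix ρ γ F) (j : ℕ) :
    Matrix (Fin (j + 2) × ρ) (Fin (j + 1) × γ) F :=
  Matrix.of fun r c =>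
    if (r.1 : ℕ) = (c.1 : ℕ) then Xc r.2 c.2
    else if (r.1 : ℕ) = (c.1 : ℕ) + 1 then Yc r.2 c.2 else 0

/-- λ-coefficient of the trimmed pencil `L̂_t(λ)`:
`[[α A_k, X₁₂],[0, -R̃]]` with row split `m + (k-1)n`. -/
def LtX {k m n : ℕ} (α : F) (Ak : Matrix (Fin m) (Fin n) F)
    (X12 : Matrix (Fin m) (Fin (k - 1) × Fin n) F)
    (R : Matrix (Fin (k - 1) × Fin n) (Fin (k - 1) × Fin n) F) :
    Matrix (Fin m ⊕ (Fin (k - 1) × Fin n)) (Fin k × Fin n) F :=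
  Matrix.of fun s q =>
    Sum.elim
      (fun r => if h : (q.1 : ℕ) = 0 then α * Ak r q.2
        else X12 r (⟨(q.1 : ℕ) - 1, by have := q.1.isLt; omega⟩, q.2))
      (fun p => if h : (q.1 : ℕ) = 0 then 0
        else -R p (⟨(q.1 : ℕ) - 1, by have := q.1.isLt; omega⟩, q.2)) s

/-- Constant coefficient of the trimmed pencil `L̂_t(λ)`:
`[[Y₁₁, α A₀],[R̃, 0]]` with row split `m + (k-1)n`. -/
def LtY {k m n : ℕ} (α : F) (A0 : Matrix (Fin m) (Fin n) F)
    (Y11 : Matrix (Fin m) (Fin (k - 1) × Fin n) F)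
    (R : Matrix (Fin (k - 1) × Fin n) (Fin (k - 1) × Fin n) F) :
    Matrix (Fin m ⊕ (Fin (k - 1) × Fin n)) (Fin k × Fin n) F :=
  Matrix.of fun s q =>
    Sum.elim
      (fun r => if h : (q.1 : ℕ) < k - 1 then Y11 r (⟨(q.1 : ℕ), h⟩, q.2)
        else α * A0 r q.2)
      (fun p => if h : (q.1 : ℕ) < k - 1 then R p (⟨(q.1 : ℕ), h⟩, q.2) else 0) s

/-! ### trimming -/

/-- The rows `[0 ∣ Q₂*] (M ⊗ I_m)`. -/
def bottomRows {k m n c : ℕ} (M : Matrix (Fin k) (Fin k) F)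
    (Q : Matrix (Fin (k - 1) × Fin m) ((Fin (k - 1) × Fin n) ⊕ Fin c) F) :
    Matrix (Fin c) (Fin k × Fin m) F :=
  (Matrix.of fun (j : Fin c) (p : Fin k × Fin m) =>
      if h : (p.1 : ℕ) = 0 then 0
      else star (Q (⟨(p.1 : ℕ) - 1, by have := p.1.isLt; omega⟩, p.2) (Sum.inr j)))
    * kronId M

/-- The square matrix `[D ; [0 ∣ Q₂*](M ⊗ I_m)]` whose invertibility makes `D` admissible. -/
def trimAux {k m n c : ℕ} (M : Matrix (Fin k) (Fin k) F)
    (Q : Matrix (Fin (k - 1) × Fin m) ((Fin (k - 1) × Fin n) ⊕ Fin c) F)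
    (D : Matrix (Fin m ⊕ (Fin (k - 1) × Fin n)) (Fin k × Fin m) F) :
    Matrix ((Fin m ⊕ (Fin (k - 1) × Fin n)) ⊕ Fin c) (Fin k × Fin m) F :=
  Matrix.of (Sum.elim (fun i j => D i j) (fun i j => bottomRows M Q i j))

/-- The columns `(M̂ᵀ ⊗ I_n) [0 ; Q₂]`. -/
def rightCols {k m n c : ℕ} (M : Matrix (Fin k) (Fin k) F)
    (Q : Matrix (Fin (k - 1) × Fin n) ((Fin (k - 1) × Fin m) ⊕ Fin c) F) :
    Matrix (Fin k × Fin n) (Fin c) F :=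
  kronId Mᵀ *
    (Matrix.of fun (q : Fin k × Fin n) (j : Fin c) =>
      if h : (q.1 : ℕ) = 0 then 0
      else Q (⟨(q.1 : ℕ) - 1, by have := q.1.isLt; omega⟩, q.2) (Sum.inr j))

/-- The square matrix `[D̂ ∣ (M̂ᵀ ⊗ I_n)[0 ; Q₂]]` whose invertibility makes `D̂` admissible. -/
def trimAux2 {k m n c : ℕ} (M : Matrix (Fin k) (Fin k) F)
    (Q : Matrix (Fin (k - 1) × Fin n) ((Fin (k - 1) × Fin m) ⊕ Fin c) F)
    (D : Matrix (Fin k × Fin n) (Fin n ⊕ (Fin (k - 1) × Fin m)) F) :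
    Matrix (Fin k × Fin n) ((Fin n ⊕ (Fin (k - 1) × Fin m)) ⊕ Fin c) F :=
  Matrix.of fun q s => Sum.elim (fun t => D q t) (fun j => rightCols M Q q j) s


/-! ### auxiliary lemmas for statement 1 -/

section Aux

variable {k m n : ℕ}

lemma coeffL (Xc Yc : Matrix (Fin k × Fin m) (Fin k × Fin n) F)
    (p : Fin k × Fin m) (c : Fin n) (d : ℕ) :
    ((pencil Xc Yc * Lam F k n) p c).coeff d =
      ∑ j : Fin k, (Xc p (j, c) * (if d = k - 1 - (j : ℕ) + 1 then 1 else 0) +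
        Yc p (j, c) * (if d = k - 1 - (j : ℕ) then 1 else 0)) := by
  have h : (pencil Xc Yc * Lam F k n) p c =
      ∑ j : Fin k, (Polynomial.C (Xc p (j, c)) * Polynomial.X ^ (k - 1 - (j : ℕ) + 1)
        + Polynomial.C (Yc p (j, c)) * Polynomial.X ^ (k - 1 - (j : ℕ))) := by
    simp only [Matrix.mul_apply, pencil, Lam, Matrix.of_apply, Fintype.sum_prod_type]
    refine Finset.sum_congr rfl fun j _ => ?_
    rw [Finset.sum_eq_single c]
    · simp [add_mul, pow_succ]; ring
    · intro b _ hb; simp [hb]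
    · simp
  rw [h, Polynomial.finset_sum_coeff]
  refine Finset.sum_congr rfl fun j _ => ?_
  simp [Polynomial.coeff_X_pow]

lemma coeffR (A : Fin (k + 1) → Matrix (Fin m) (Fin n) F) (v : Fin k → F)
    (p : Fin k × Fin m) (c : Fin n) (d : ℕ) :
    ((vkron v (matPoly A)) p c).coeff d =
      v p.1 * ∑ i : Fin (k + 1), A i p.2 c * (if d = (i : ℕ) then 1 else 0) := by
  simp [vkron, matPoly, Polynomial.coeff_X_pow, Finset.mul_sum]

lemma sumX (hk : 0 < k) (f : Fin k → F) (d : ℕ) :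
    ∑ j : Fin k, f j * (if d = k - 1 - (j : ℕ) + 1 then 1 else 0) =
      if h : 0 < d ∧ d ≤ k then f ⟨k - d, by omega⟩ else 0 := by
  by_cases h : 0 < d ∧ d ≤ k
  · rw [dif_pos h, Finset.sum_eq_single (⟨k - d, by omega⟩ : Fin k)]
    · rw [if_pos (by simp; omega), mul_one]
    · intro b _ hb
      rw [if_neg, mul_zero]
      intro hc
      exact hb (Fin.ext (show (b : ℕ) = k - d by have := b.isLt; omega))
    · intro hmem; exact absurd (Finset.mem_univ _) hmem
  · rw [dif_neg h, Finset.sum_eq_zero]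
    intro b _
    rw [if_neg, mul_zero]
    have := b.isLt; omega

lemma sumY (hk : 0 < k) (f : Fin k → F) (d : ℕ) :
    ∑ j : Fin k, f j * (if d = k - 1 - (j : ℕ) then 1 else 0) =
      if h : d < k then f ⟨k - 1 - d, by omega⟩ else 0 := by
  by_cases h : d < k
  · rw [dif_pos h, Finset.sum_eq_single (⟨k - 1 - d, by omega⟩ : Fin k)]
    · rw [if_pos (by simp; omega), mul_one]
    · intro b _ hb
      rw [if_neg, mul_zero]
      intro hc
      exact hb (Fin.ext (show (b : ℕ) = k - 1 - d by have := b.isLt; omega))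
    · intro hmem; exact absurd (Finset.mem_univ _) hmem
  · rw [dif_neg h, Finset.sum_eq_zero]
    intro b _
    rw [if_neg, mul_zero]
    have := b.isLt; omega

lemma sumR (g : Fin (k + 1) → F) (d : ℕ) :
    ∑ i : Fin (k + 1), g i * (if d = (i : ℕ) then 1 else 0) =
      if h : d ≤ k then g ⟨d, by omega⟩ else 0 := by
  by_cases h : d ≤ k
  · rw [dif_pos h, Finset.sum_eq_single (⟨d, by omega⟩ : Fin (k + 1))]
    · rw [if_pos (by simp), mul_one]
    · intro b _ hb
      rw [if_neg, mul_zero]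
      intro hc
      exact hb (Fin.ext (show (b : ℕ) = d by omega))
    · intro hmem; exact absurd (Finset.mem_univ _) hmem
  · rw [dif_neg h, Finset.sum_eq_zero]
    intro b _
    rw [if_neg, mul_zero]
    have := b.isLt; omega

lemma key (hk : 0 < k) (A : Fin (k + 1) → Matrix (Fin m) (Fin n) F) (v : Fin k → F)
    (Xc Yc : Matrix (Fin k × Fin m) (Fin k × Fin n) F) :
    RightAnsatz (matPoly A) (pencil Xc Yc) v ↔
      ∀ (p : Fin k × Fin m) (c : Fin n) (d : ℕ) (hd : d ≤ k),
        ((if h : 0 < d then Xc p (⟨k - d, by omega⟩, c) else 0) +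
         (if h : d < k then Yc p (⟨k - 1 - d, by omega⟩, c) else 0))
          = v p.1 * A ⟨d, by omega⟩ p.2 c := by
  have unf : RightAnsatz (matPoly A) (pencil Xc Yc) v ↔
      pencil Xc Yc * Lam F k n = vkron v (matPoly A) := Iff.rfl
  rw [unf]
  constructor
  · intro hE p c d hd
    have h2 : ((pencil Xc Yc * Lam F k n) p c).coeff d
        = ((vkron v (matPoly A)) p c).coeff d := by rw [hE]
    rw [coeffL, coeffR, Finset.sum_add_distrib, sumX hk, sumY hk, sumR] at h2
    rw [dif_pos hd] at h2
    rw [← h2]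
    congr 1
    by_cases h0 : 0 < d
    · rw [dif_pos h0, dif_pos ⟨h0, hd⟩]
    · rw [dif_neg h0, dif_neg (by omega)]
  · intro hC
    ext p q d
    rw [coeffL, coeffR, Finset.sum_add_distrib, sumX hk, sumY hk, sumR]
    by_cases hd : d ≤ k
    · rw [dif_pos hd]
      have := hC p q d hd
      rw [← this]
      congr 1
      by_cases h0 : 0 < d
      · rw [dif_pos h0, dif_pos ⟨h0, hd⟩]
      · rw [dif_neg (by omega), dif_neg h0]
    · rw [dif_neg hd, dif_neg (by omega), dif_neg (by omega), mul_zero, add_zero]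



lemma L1char (hk : 0 < k) (A : Fin (k + 1) → Matrix (Fin m) (Fin n) F) (v : Fin k → F)
    (Xc Yc : Matrix (Fin k × Fin m) (Fin k × Fin n) F) :
    RightAnsatz (matPoly A) (pencil Xc Yc) v ↔
      ∃ W : Matrix (Fin k × Fin m) (Fin (k - 1) × Fin n) F,
        Xc = L1X A v W ∧ Yc = L1Y A v W := by
  rw [key hk]
  constructor
  · intro hC
    refine ⟨Matrix.of fun p q => -Xc p (⟨(q.1 : ℕ) + 1, by have := q.1.isLt; omega⟩, q.2),
      ?_, ?_⟩
    · ext p q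
      simp only [L1X, Matrix.of_apply]
      by_cases hq : (q.1 : ℕ) = 0
      · rw [dif_pos hq]
        have h := hC p q.2 k le_rfl
        rw [dif_pos hk, dif_neg (lt_irrefl k), add_zero] at h
        have e1 : ((⟨k - k, by omega⟩ : Fin k), q.2) = q := by
          refine Prod.ext (Fin.ext ?_) rfl
          simp; omega
        have e2 : (⟨k, by omega⟩ : Fin (k + 1)) = Fin.last k := rfl
        rw [e1, e2] at h
        exact h
      · rw [dif_neg hq, neg_neg]
        congr 1
        refine Prod.ext (Fin.ext ?_) rfl
        have := q.1.isLt
        simp; omega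
    · ext p q
      simp only [L1Y, Matrix.of_apply]
      by_cases hq : (q.1 : ℕ) < k - 1
      · rw [dif_pos hq]
        have h := hC p q.2 (k - 1 - (q.1 : ℕ)) (by omega)
        rw [dif_pos (by omega), dif_pos (by omega)] at h
        have e1 : ((⟨k - (k - 1 - (q.1 : ℕ)), by omega⟩ : Fin k), q.2)
            = ((⟨(q.1 : ℕ) + 1, by omega⟩ : Fin k), q.2) := by
          refine Prod.ext (Fin.ext ?_) rfl; simp; omega
        have e2 : ((⟨k - 1 - (k - 1 - (q.1 : ℕ)), by omega⟩ : Fin k), q.2) = q := by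
          refine Prod.ext (Fin.ext ?_) rfl; simp; omega
        rw [e1, e2] at h
        have : Yc p q = -Xc p (⟨(q.1 : ℕ) + 1, by omega⟩, q.2)
            + v p.1 * A ⟨k - 1 - (q.1 : ℕ), by omega⟩ p.2 q.2 := by
          rw [← h]; ring
        rw [this]
      · rw [dif_neg hq]
        have h := hC p q.2 0 (by omega)
        rw [dif_neg (lt_irrefl 0), dif_pos hk, zero_add] at h
        have e2 : ((⟨k - 1 - 0, by omega⟩ : Fin k), q.2) = q := by
          refine Prod.ext (Fin.ext ?_) rfl
          have := q.1.isLt; simp; omega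
        have e3 : (⟨0, by omega⟩ : Fin (k + 1)) = 0 := rfl
        rw [e2, e3] at h
        exact h
  · rintro ⟨W, rfl, rfl⟩ p c d hd
    simp only [L1X, L1Y, Matrix.of_apply]
    rcases Nat.eq_zero_or_pos d with h0 | h0
    · subst h0
      rw [dif_neg (lt_irrefl 0), dif_pos hk, zero_add, dif_neg (by simp)]
      congr 1
    · rcases eq_or_lt_of_le hd with hK | hK
      · subst hK
        rw [dif_pos h0, dif_neg (lt_irrefl d), add_zero, dif_pos (by simp)]
        have : (⟨d, by omega⟩ : Fin (d + 1)) = Fin.last d := rfl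
        rw [this]
      · -- 0 < d < k
        rw [dif_pos h0, dif_pos hK, dif_neg (show ¬((k : ℕ) - d = 0) by omega), dif_pos (show k - 1 - d < k - 1 by omega)]
        have e1 : ((⟨k - d - 1, by omega⟩ : Fin (k - 1)), c)
            = ((⟨k - 1 - d, by omega⟩ : Fin (k - 1)), c) := by
          refine Prod.ext (Fin.ext ?_) rfl; simp; omega
        rw [e1]
        have e2 : (⟨k - 1 - (k - 1 - d), by omega⟩ : Fin (k + 1)) = ⟨d, by omega⟩ := by
          refine Fin.ext ?_; simp; omega
        rw [e2]
        ring

lemma lam_eq_lamRow_transpose : Lam F k m = (LamRow F k m)ᵀ := by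
  ext p c
  simp only [Lam, LamRow, Matrix.transpose_apply, Matrix.of_apply]
  by_cases h : p.2 = c
  · rw [if_pos h, if_pos h.symm]
  · rw [if_neg h, if_neg (Ne.symm h)]

lemma matPoly_transpose (A : Fin (k + 1) → Matrix (Fin m) (Fin n) F) :
    matPoly (fun i => (A i)ᵀ) = (matPoly A)ᵀ := by
  ext r c
  simp [matPoly]

lemma vkron_wkron (w : Fin k → F) (P : Matrix (Fin m) (Fin n) F[X]) :
    vkron w Pᵀ = (wkron w P)ᵀ := by
  ext p c
  simp [vkron, wkron]

lemma leftAnsatz_iff (A : Fin (k + 1) → Matrix (Fin m) (Fin n) F) (w : Fin k → F)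
    (Xc Yc : Matrix (Fin k × Fin m) (Fin k × Fin n) F) :
    LeftAnsatz (matPoly A) (pencil Xc Yc) w ↔
      RightAnsatz (matPoly (fun i => (A i)ᵀ)) (pencil Xcᵀ Ycᵀ) w := by
  have hpen : pencil Xcᵀ Ycᵀ = (pencil Xc Yc)ᵀ := by
    ext p q; simp [pencil]
  rw [RightAnsatz, LeftAnsatz, hpen, lam_eq_lamRow_transpose, matPoly_transpose,
    vkron_wkron, ← Matrix.transpose_mul]
  exact ⟨fun h => by rw [h], fun h => Matrix.transpose_injective h⟩

lemma L2X_eq (A : Fin (k + 1) → Matrix (Fin m) (Fin n) F) (w : Fin k → F)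
    (W : Matrix (Fin (k - 1) × Fin m) (Fin k × Fin n) F) :
    (L1X (fun i => (A i)ᵀ) w Wᵀ)ᵀ = L2X A w W := by
  ext p q
  simp only [L1X, L2X, Matrix.transpose_apply, Matrix.of_apply]

lemma L2Y_eq (A : Fin (k + 1) → Matrix (Fin m) (Fin n) F) (w : Fin k → F)
    (W : Matrix (Fin (k - 1) × Fin m) (Fin k × Fin n) F) :
    (L1Y (fun i => (A i)ᵀ) w Wᵀ)ᵀ = L2Y A w W := by
  ext p q
  simp only [L1Y, L2Y, Matrix.transpose_apply, Matrix.of_apply]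

lemma L2char (hk : 0 < k) (A : Fin (k + 1) → Matrix (Fin m) (Fin n) F) (w : Fin k → F)
    (Xc Yc : Matrix (Fin k × Fin m) (Fin k × Fin n) F) :
    LeftAnsatz (matPoly A) (pencil Xc Yc) w ↔
      ∃ W : Matrix (Fin (k - 1) × Fin m) (Fin k × Fin n) F,
        Xc = L2X A w W ∧ Yc = L2Y A w W := by
  rw [leftAnsatz_iff, L1char hk]
  constructor
  · rintro ⟨W', h1, h2⟩
    refine ⟨W'ᵀ, ?_, ?_⟩
    · rw [← L2X_eq, Matrix.transpose_transpose, ← h1, Matrix.transpose_transpose]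
    · rw [← L2Y_eq, Matrix.transpose_transpose, ← h2, Matrix.transpose_transpose]
  · rintro ⟨W, rfl, rfl⟩
    exact ⟨Wᵀ, by rw [← L2X_eq, Matrix.transpose_transpose],
      by rw [← L2Y_eq, Matrix.transpose_transpose]⟩

lemma pencil_zero {ρ γ : Type*} : pencil (0 : Matrix ρ γ F) 0 = 0 := by
  ext i j; simp [pencil]

lemma matPoly_coeff (A : Fin (k + 1) → Matrix (Fin m) (Fin n) F) (r : Fin m) (c : Fin n)
    (i : Fin (k + 1)) : (matPoly A r c).coeff (i : ℕ) = A i r c := by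
  simp only [matPoly, Matrix.of_apply, Polynomial.finset_sum_coeff,
    Polynomial.coeff_C_mul, Polynomial.coeff_X_pow]
  rw [sumR, dif_pos (by omega)]

/-- The parametrization of `𝕃₁(P)` as a linear map. -/
def Phi1 (A : Fin (k + 1) → Matrix (Fin m) (Fin n) F) :
    ((Fin k → F) × Matrix (Fin k × Fin m) (Fin (k - 1) × Fin n) F) →ₗ[F]
      (Matrix (Fin k × Fin m) (Fin k × Fin n) F ×
        Matrix (Fin k × Fin m) (Fin k × Fin n) F) where
  toFun vW := (L1X A vW.1 vW.2, L1Y A vW.1 vW.2)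
  map_add' vW vW' := by
    refine Prod.ext ?_ ?_ <;> ext p q <;>
      simp only [L1X, L1Y, Matrix.of_apply, Matrix.add_apply, Prod.fst_add, Prod.snd_add,
        Pi.add_apply] <;> split_ifs <;> ring
  map_smul' a vW := by
    refine Prod.ext ?_ ?_ <;> ext p q <;>
      simp only [L1X, L1Y, Matrix.of_apply, Matrix.smul_apply, Prod.smul_fst, Prod.smul_snd,
        Pi.smul_apply, smul_eq_mul, RingHom.id_apply] <;> split_ifs <;> ring

/-- The parametrization of `𝕃₂(P)` as a linear map. -/
def Phi2 (A : Fin (k + 1) → Matrix (Fin m) (Fin n) F) :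
    ((Fin k → F) × Matrix (Fin (k - 1) × Fin m) (Fin k × Fin n) F) →ₗ[F]
      (Matrix (Fin k × Fin m) (Fin k × Fin n) F ×
        Matrix (Fin k × Fin m) (Fin k × Fin n) F) where
  toFun vW := (L2X A vW.1 vW.2, L2Y A vW.1 vW.2)
  map_add' vW vW' := by
    refine Prod.ext ?_ ?_ <;> ext p q <;>
      simp only [L2X, L2Y, Matrix.of_apply, Matrix.add_apply, Prod.fst_add, Prod.snd_add,
        Pi.add_apply] <;> split_ifs <;> ring
  map_smul' a vW := by
    refine Prod.ext ?_ ?_ <;> ext p q <;>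
      simp only [L2X, L2Y, Matrix.of_apply, Matrix.smul_apply, Prod.smul_fst, Prod.smul_snd,
        Pi.smul_apply, smul_eq_mul, RingHom.id_apply] <;> split_ifs <;> ring

lemma exists_ne_zero (A : Fin (k + 1) → Matrix (Fin m) (Fin n) F) (hA : A ≠ 0) :
    ∃ i r c, A i r c ≠ 0 := by
  by_contra h
  push_neg at h
  exact hA (funext fun i => Matrix.ext fun r c => h i r c)

lemma matPoly_entry_ne (A : Fin (k + 1) → Matrix (Fin m) (Fin n) F) {i : Fin (k + 1)}
    {r : Fin m} {c : Fin n} (h : A i r c ≠ 0) : matPoly A r c ≠ 0 := fun h0 =>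
  h (by rw [← matPoly_coeff A r c i, h0, Polynomial.coeff_zero])

lemma Phi1_inj (hk : 0 < k) (A : Fin (k + 1) → Matrix (Fin m) (Fin n) F) (hA : A ≠ 0) :
    Function.Injective (Phi1 (F := F) A) := by
  rw [← LinearMap.ker_eq_bot]
  refine LinearMap.ker_eq_bot'.mpr ?_
  rintro ⟨v, W⟩ hz
  have h1 : L1X A v W = 0 := congrArg Prod.fst hz
  have h2 : L1Y A v W = 0 := congrArg Prod.snd hz
  obtain ⟨i, r, c, hArc⟩ := exists_ne_zero A hA
  have hRA : RightAnsatz (matPoly A) (pencil (0 : Matrix (Fin k × Fin m) (Fin k × Fin n) F) 0) v :=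
    (L1char hk A v 0 0).mpr ⟨W, h1.symm, h2.symm⟩
  have hvk : vkron v (matPoly A) = 0 := by
    have : pencil (0 : Matrix (Fin k × Fin m) (Fin k × Fin n) F) 0 * Lam F k n
        = vkron v (matPoly A) := hRA
    rw [pencil_zero, Matrix.zero_mul] at this
    exact this.symm
  have hv : v = 0 := by
    funext p1
    have he : Polynomial.C (v p1) * matPoly A r c = 0 := congrFun (congrFun hvk (p1, r)) c
    rcases mul_eq_zero.mp he with h | h
    · exact Polynomial.C_eq_zero.mp h
    · exact absurd h (matPoly_entry_ne A hArc)
  have hW : W = 0 := by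
    ext p q
    have he := congrFun (congrFun h1 p) (⟨(q.1 : ℕ) + 1, by have := q.1.isLt; omega⟩, q.2)
    simp only [L1X, Matrix.of_apply, Matrix.zero_apply] at he ⊢
    rw [dif_neg (by simp)] at he
    have e1 : ((⟨(q.1 : ℕ) + 1 - 1, by have := q.1.isLt; omega⟩ : Fin (k - 1)), q.2) = q := by
      refine Prod.ext (Fin.ext ?_) rfl; simp
    rw [e1] at he
    exact neg_eq_zero.mp he
  rw [hv, hW]
  rfl

lemma Phi2_inj (hk : 0 < k) (A : Fin (k + 1) → Matrix (Fin m) (Fin n) F) (hA : A ≠ 0) :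
    Function.Injective (Phi2 (F := F) A) := by
  rw [← LinearMap.ker_eq_bot]
  refine LinearMap.ker_eq_bot'.mpr ?_
  rintro ⟨w, W⟩ hz
  have h1 : L2X A w W = 0 := congrArg Prod.fst hz
  have h2 : L2Y A w W = 0 := congrArg Prod.snd hz
  obtain ⟨i, r, c, hArc⟩ := exists_ne_zero A hA
  have hLA : LeftAnsatz (matPoly A) (pencil (0 : Matrix (Fin k × Fin m) (Fin k × Fin n) F) 0) w :=
    (L2char hk A w 0 0).mpr ⟨W, h1.symm, h2.symm⟩
  have hvk : wkron w (matPoly A) = 0 := by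
    have : LamRow F k m * pencil (0 : Matrix (Fin k × Fin m) (Fin k × Fin n) F) 0
        = wkron w (matPoly A) := hLA
    rw [pencil_zero, Matrix.mul_zero] at this
    exact this.symm
  have hv : w = 0 := by
    funext q1
    have he : Polynomial.C (w q1) * matPoly A r c = 0 := congrFun (congrFun hvk r) (q1, c)
    rcases mul_eq_zero.mp he with h | h
    · exact Polynomial.C_eq_zero.mp h
    · exact absurd h (matPoly_entry_ne A hArc)
  have hW : W = 0 := by
    ext p q
    have he := congrFun (congrFun h1 (⟨(p.1 : ℕ) + 1, by have := p.1.isLt; omega⟩, p.2)) q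
    simp only [L2X, Matrix.of_apply, Matrix.zero_apply] at he ⊢
    rw [dif_neg (by simp)] at he
    have e1 : ((⟨(p.1 : ℕ) + 1 - 1, by have := p.1.isLt; omega⟩ : Fin (k - 1)), p.2) = p := by
      refine Prod.ext (Fin.ext ?_) rfl; simp
    rw [e1] at he
    exact neg_eq_zero.mp he
  rw [hv, hW]
  rfl
end Aux
/-- Characterization of the pencils in `𝕃₁(P)` with right ansatz vector `v`
and of the pencils in `𝕃₂(P)` with left ansatz vector `w`; consequently `𝕃₁(P)` and `𝕃₂(P)`
are `F`-vector spaces of dimension `k(k-1)mn + k`. -/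
theorem statement_1 {F : Type*} [RCLike F] {k m n : ℕ} (hk : 0 < k)
    (A : Fin (k + 1) → Matrix (Fin m) (Fin n) F) (hA : A ≠ 0) :
    (∀ (v : Fin k → F) (Xc Yc : Matrix (Fin k × Fin m) (Fin k × Fin n) F),
      RightAnsatz (matPoly A) (pencil Xc Yc) v ↔
        ∃ W : Matrix (Fin k × Fin m) (Fin (k - 1) × Fin n) F,
          Xc = L1X A v W ∧ Yc = L1Y A v W) ∧
    (∀ (w : Fin k → F) (Xc Yc : Matrix (Fin k × Fin m) (Fin k × Fin n) F),
      LeftAnsatz (matPoly A) (pencil Xc Yc) w ↔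
        ∃ W : Matrix (Fin (k - 1) × Fin m) (Fin k × Fin n) F,
          Xc = L2X A w W ∧ Yc = L2Y A w W) ∧
    (∃ S : Submodule F (Matrix (Fin k × Fin m) (Fin k × Fin n) F ×
        Matrix (Fin k × Fin m) (Fin k × Fin n) F),
      (S : Set (Matrix (Fin k × Fin m) (Fin k × Fin n) F ×
          Matrix (Fin k × Fin m) (Fin k × Fin n) F)) =
        {XY | ∃ v : Fin k → F, RightAnsatz (matPoly A) (pencil XY.1 XY.2) v} ∧
      Module.finrank F S = k * (k - 1) * m * n + k) ∧
    (∃ S : Submodule F (Matrix (Fin k × Fin m) (Fin k × Fin n) F ×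
        Matrix (Fin k × Fin m) (Fin k × Fin n) F),
      (S : Set (Matrix (Fin k × Fin m) (Fin k × Fin n) F ×
          Matrix (Fin k × Fin m) (Fin k × Fin n) F)) =
        {XY | ∃ w : Fin k → F, LeftAnsatz (matPoly A) (pencil XY.1 XY.2) w} ∧
      Module.finrank F S = k * (k - 1) * m * n + k) := by
  refine ⟨fun v Xc Yc => L1char hk A v Xc Yc, fun w Xc Yc => L2char hk A w Xc Yc, ?_, ?_⟩
  · refine ⟨LinearMap.range (Phi1 A), ?_, ?_⟩
    · ext XY
      simp only [SetLike.mem_coe, LinearMap.mem_range, Set.mem_setOf_eq]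
      constructor
      · rintro ⟨⟨v, W⟩, hEq⟩
        exact ⟨v, (L1char hk A v _ _).mpr
          ⟨W, (congrArg Prod.fst hEq).symm, (congrArg Prod.snd hEq).symm⟩⟩
      · rintro ⟨v, hv⟩
        obtain ⟨W, hX, hY⟩ := (L1char hk A v _ _).mp hv
        exact ⟨(v, W), Prod.ext hX.symm hY.symm⟩
    · rw [LinearMap.finrank_range_of_inj (Phi1_inj hk A hA), Module.finrank_prod,
        Module.finrank_pi, Module.finrank_matrix]
      simp only [Module.finrank_self, mul_one, Fintype.card_prod, Fintype.card_fin]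
      have h : k * m * ((k - 1) * n) = k * (k - 1) * m * n := by ring
      omega
  · refine ⟨LinearMap.range (Phi2 A), ?_, ?_⟩
    · ext XY
      simp only [SetLike.mem_coe, LinearMap.mem_range, Set.mem_setOf_eq]
      constructor
      · rintro ⟨⟨w, W⟩, hEq⟩
        exact ⟨w, (L2char hk A w _ _).mpr
          ⟨W, (congrArg Prod.fst hEq).symm, (congrArg Prod.snd hEq).symm⟩⟩
      · rintro ⟨w, hw⟩
        obtain ⟨W, hX, hY⟩ := (L2char hk A w _ _).mp hw
        exact ⟨(w, W), Prod.ext hX.symm hY.symm⟩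
    · rw [LinearMap.finrank_range_of_inj (Phi2_inj hk A hA), Module.finrank_prod,
        Module.finrank_pi, Module.finrank_matrix]
      simp only [Module.finrank_self, mul_one, Fintype.card_prod, Fintype.card_fin]
      have h : (k - 1) * m * (k * n) = k * (k - 1) * m * n := by ring
      omega
end GLin
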